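/- arXiv:1610.00641 — 2 statements merged into one kernel-verified Lean document; each statement's English description precedes it below -/
import Mathlib

section
/- Moments of the Kesten distribution: let V be a random variable with Lebesgue density p(x) = (2/π) Σ_{k∈ℕ₀} ((-1)^k/(2k+1)) exp(-(2k+1)²π²|x|/8), x ∈ ℝ. Then for every p > 0, E(|V|^p) = (4 Γ(p+1) 8^{p+1} / π^{2p+3}) · Σ_{k∈ℕ₀} (-1)^k/(2k+1)^{2p+3}, which is finite; in particular E(V^p) is finite for all p > 0, and E(V^m) = 0 for every odd integer m by the symmetry of p. -/
/-!
The Kesten density is a signed mixture of Laplace densities, `p(x) = ∑ aₖ exp(-cₖ|x|)` with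
`aₖ = (2/π)(-1)ᵏ/(2k+1)` and `cₖ = (2k+1)²π²/8`. Each term contributes
`∫ |x|^p exp(-c|x|) dx = 2 Γ(p+1) / c^(p+1)`, and `|aₖ| / cₖ^(p+1)` is a multiple of
`(2k+1)^(-(2p+3))`, which is summable for `p > -1`. So the integrals of the norms of the terms are
summable, which justifies integrating term by term. Odd moments vanish because `x ↦ xᵐ p(x)` is odd.
-/

open MeasureTheory Real

noncomputable section

/-- The density of the Kesten random variable `V`:
`p(x) = (2/π) ∑_{k≥0} ((-1)^k/(2k+1)) exp(-(2k+1)²π²|x|/8)`. -/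
def kestenDensity (x : ℝ) : ℝ :=
  (2 / Real.pi) * ∑' k : ℕ,
    ((-1 : ℝ) ^ k / (2 * (k : ℝ) + 1)) *
      Real.exp (-(((2 * (k : ℝ) + 1) ^ 2 * Real.pi ^ 2) / 8) * |x|)

open Set

lemma integrable_comp_abs_of_integrableOn_Ioi {E : Type*} [NormedAddCommGroup E] {f : ℝ → E}
    (hf : IntegrableOn f (Ioi 0)) : Integrable fun x : ℝ => f |x| := by
  have hpos : IntegrableOn (fun x : ℝ => f |x|) (Ioi 0) :=
    hf.congr_fun (fun x hx => by rw [abs_of_pos hx]) measurableSet_Ioi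
  have hneg : IntegrableOn (fun x : ℝ => f |x|) (Iic 0) := by
    have h := hf.comp_neg
    rw [neg_Ioi, neg_zero] at h
    rw [integrableOn_Iic_iff_integrableOn_Iio]
    exact h.congr_fun (fun x hx => by rw [abs_of_neg hx]) measurableSet_Iio
  simpa using hneg.union hpos

lemma integrable_abs_rpow_mul_exp_neg_mul_abs {p c : ℝ} (hp : -1 < p) (hc : 0 < c) :
    Integrable fun x : ℝ => |x| ^ p * exp (-c * |x|) := by
  apply integrable_comp_abs_of_integrableOn_Ioi (f := fun x => x ^ p * exp (-c * x))
  simpa using integrableOn_rpow_mul_exp_neg_mul_rpow hp one_pos hc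

lemma integral_abs_rpow_mul_exp_neg_mul_abs {p c : ℝ} (hp : -1 < p) (hc : 0 < c) :
    ∫ x : ℝ, |x| ^ p * exp (-c * |x|) = 2 * Gamma (p + 1) / c ^ (p + 1) := by
  have h := integral_rpow_mul_exp_neg_mul_Ioi (a := p + 1) (by linarith) hc
  rw [add_sub_cancel_right, one_div, inv_rpow hc.le] at h
  rw [integral_comp_abs (f := fun x => x ^ p * exp (-c * x))]
  simp only [neg_mul, h]
  ring

lemma integrable_tsum_of_summable_integral_norm {α E ι : Type*} [MeasurableSpace α]
    {μ : Measure α} [NormedAddCommGroup E] [CompleteSpace E] [Countable ι] {F : ι → α → E}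
    (hF_int : ∀ i, Integrable (F i) μ) (hF_sum : Summable fun i => ∫ a, ‖F i a‖ ∂μ) :
    Integrable (fun a => ∑' i, F i a) μ := by
  refine ⟨AEStronglyMeasurable.tsum fun i => (hF_int i).1, ?_⟩
  calc ∫⁻ a, ‖∑' i, F i a‖ₑ ∂μ ≤ ∫⁻ a, ∑' i, ‖F i a‖ₑ ∂μ :=
        lintegral_mono fun a => enorm_tsum_le_tsum_enorm
    _ = ∑' i, ENNReal.ofReal (∫ a, ‖F i a‖ ∂μ) := by
        rw [lintegral_tsum fun i => (hF_int i).1.enorm]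
        exact tsum_congr fun i => (ofReal_integral_norm_eq_lintegral_enorm (hF_int i)).symm
    _ < ⊤ := by
        rw [← ENNReal.ofReal_tsum_of_nonneg (fun i => integral_nonneg fun a => norm_nonneg _)
          hF_sum]
        exact ENNReal.ofReal_lt_top

lemma abs_rpow_mul_tsum_exp (p : ℝ) (a c : ℕ → ℝ) (x : ℝ) :
    |x| ^ p * ∑' k, a k * exp (-c k * |x|) = ∑' k, a k * (|x| ^ p * exp (-c k * |x|)) := by
  rw [← tsum_mul_left]
  exact tsum_congr fun k => mul_left_comm _ _ _

lemma integral_norm_mul_abs_rpow_mul_exp_neg_mul_abs {p c : ℝ} (hp : -1 < p) (hc : 0 < c)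
    (a : ℝ) :
    ∫ x : ℝ, ‖a * (|x| ^ p * exp (-c * |x|))‖ = 2 * Gamma (p + 1) * (|a| / c ^ (p + 1)) := by
  have hnorm (x : ℝ) : ‖a * (|x| ^ p * exp (-c * |x|))‖ = |a| * (|x| ^ p * exp (-c * |x|)) := by
    rw [norm_mul, Real.norm_eq_abs, Real.norm_of_nonneg (by positivity)]
  simp_rw [hnorm]
  rw [integral_const_mul, integral_abs_rpow_mul_exp_neg_mul_abs hp hc]
  ring

section LaplaceMixture

variable {p : ℝ} {a c : ℕ → ℝ}

lemma integrable_laplace_term (hp : -1 < p) (hc : ∀ k, 0 < c k) (k : ℕ) :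
    Integrable fun x : ℝ => a k * (|x| ^ p * exp (-c k * |x|)) :=
  (integrable_abs_rpow_mul_exp_neg_mul_abs hp (hc k)).const_mul _

lemma summable_integral_norm_laplace_term (hp : -1 < p) (hc : ∀ k, 0 < c k)
    (hsum : Summable fun k => |a k| / c k ^ (p + 1)) :
    Summable fun k => ∫ x : ℝ, ‖a k * (|x| ^ p * exp (-c k * |x|))‖ := by
  simp_rw [integral_norm_mul_abs_rpow_mul_exp_neg_mul_abs hp (hc _)]
  exact hsum.mul_left _

lemma integrable_abs_rpow_mul_tsum_exp (hp : -1 < p) (hc : ∀ k, 0 < c k)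
    (hsum : Summable fun k => |a k| / c k ^ (p + 1)) :
    Integrable fun x : ℝ => |x| ^ p * ∑' k, a k * exp (-c k * |x|) := by
  simp_rw [abs_rpow_mul_tsum_exp]
  exact integrable_tsum_of_summable_integral_norm (integrable_laplace_term hp hc)
    (summable_integral_norm_laplace_term hp hc hsum)

lemma hasSum_integral_abs_rpow_mul_tsum_exp (hp : -1 < p) (hc : ∀ k, 0 < c k)
    (hsum : Summable fun k => |a k| / c k ^ (p + 1)) :
    HasSum (fun k => 2 * Gamma (p + 1) * (a k / c k ^ (p + 1)))
      (∫ x : ℝ, |x| ^ p * ∑' k, a k * exp (-c k * |x|)) := by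
  simp_rw [abs_rpow_mul_tsum_exp]
  have hterm (k : ℕ) : ∫ x : ℝ, a k * (|x| ^ p * exp (-c k * |x|)) =
      2 * Gamma (p + 1) * (a k / c k ^ (p + 1)) := by
    rw [integral_const_mul, integral_abs_rpow_mul_exp_neg_mul_abs hp (hc k)]
    ring
  simpa only [hterm] using hasSum_integral_of_summable_integral_norm
    (integrable_laplace_term hp hc) (summable_integral_norm_laplace_term hp hc hsum)

end LaplaceMixture

lemma summable_one_div_two_mul_add_one_rpow {s : ℝ} (hs : 1 < s) :
    Summable fun k : ℕ => 1 / (2 * (k : ℝ) + 1) ^ s := by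
  refine ((summable_one_div_nat_add_rpow 1 s).mpr hs).of_nonneg_of_le
    (fun k => by positivity) fun k => ?_
  rw [abs_of_pos (by positivity)]
  gcongr
  linarith [(k.cast_nonneg : (0 : ℝ) ≤ k)]

lemma kesten_coeff_div_rate_rpow {u : ℝ} (hu : 0 < u) (b p : ℝ) :
    2 / π * (b / u) / ((u ^ 2 * π ^ 2) / 8) ^ (p + 1) =
      2 * 8 ^ (p + 1) / π ^ (2 * p + 3) * (b / u ^ (2 * p + 3)) := by
  have hsq {v : ℝ} (hv : 0 < v) : (v ^ 2) ^ (p + 1) * v = v ^ (2 * p + 3) := by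
    rw [← rpow_natCast, ← rpow_mul hv.le, ← rpow_add_one hv.ne']
    push_cast
    ring_nf
  rw [div_rpow (by positivity) (by norm_num), mul_rpow (by positivity) (by positivity),
    ← hsq hu, ← hsq pi_pos]
  field_simp

lemma kestenDensity_eq_tsum (x : ℝ) :
    kestenDensity x = ∑' k : ℕ, 2 / π * ((-1) ^ k / (2 * (k : ℝ) + 1)) *
      exp (-(((2 * (k : ℝ) + 1) ^ 2 * π ^ 2) / 8) * |x|) := by
  rw [kestenDensity, ← tsum_mul_left]
  simp only [mul_assoc]

lemma summable_abs_kesten_coeff_div_rate_rpow {p : ℝ} (hp : -1 < p) :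
    Summable fun k : ℕ => |2 / π * ((-1) ^ k / (2 * (k : ℝ) + 1))| /
      (((2 * (k : ℝ) + 1) ^ 2 * π ^ 2) / 8) ^ (p + 1) := by
  have hterm (k : ℕ) : |2 / π * ((-1) ^ k / (2 * (k : ℝ) + 1))| /
      (((2 * (k : ℝ) + 1) ^ 2 * π ^ 2) / 8) ^ (p + 1) =
        2 * 8 ^ (p + 1) / π ^ (2 * p + 3) * (1 / (2 * (k : ℝ) + 1) ^ (2 * p + 3)) := by
    rw [← abs_of_pos (by positivity : 0 < (((2 * (k : ℝ) + 1) ^ 2 * π ^ 2) / 8) ^ (p + 1)),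
      ← abs_div, kesten_coeff_div_rate_rpow (by positivity), abs_mul,
      abs_of_pos (by positivity : (0 : ℝ) < 2 * 8 ^ (p + 1) / π ^ (2 * p + 3)), abs_div,
      abs_pow, abs_neg, abs_one, one_pow,
      abs_of_pos (by positivity : (0 : ℝ) < (2 * (k : ℝ) + 1) ^ (2 * p + 3))]
  simp_rw [hterm]
  exact (summable_one_div_two_mul_add_one_rpow (by linarith)).mul_left _

theorem integrable_and_hasSum_integral_abs_rpow_mul_kestenDensity {p : ℝ} (hp : -1 < p) :
    Integrable (fun x : ℝ => |x| ^ p * kestenDensity x) ∧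
      HasSum (fun k : ℕ => 4 * Gamma (p + 1) * 8 ^ (p + 1) / π ^ (2 * p + 3) *
          ((-1) ^ k / (2 * (k : ℝ) + 1) ^ (2 * p + 3)))
        (∫ x : ℝ, |x| ^ p * kestenDensity x) := by
  have hrate (k : ℕ) : 0 < ((2 * (k : ℝ) + 1) ^ 2 * π ^ 2) / 8 := by positivity
  simp_rw [kestenDensity_eq_tsum]
  refine ⟨integrable_abs_rpow_mul_tsum_exp hp hrate
    (summable_abs_kesten_coeff_div_rate_rpow hp), ?_⟩
  convert hasSum_integral_abs_rpow_mul_tsum_exp hp hrate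
    (summable_abs_kesten_coeff_div_rate_rpow hp) using 2 with k
  rw [kesten_coeff_div_rate_rpow (by positivity)]
  ring

lemma kestenDensity_even : Function.Even kestenDensity := fun x => by
  simp only [kestenDensity, abs_neg]

lemma Function.Odd.integral_eq_zero {G E : Type*} [MeasurableSpace G] [AddGroup G]
    [MeasurableNeg G] [NormedAddCommGroup E] [NormedSpace ℝ E] {μ : Measure G}
    [μ.IsNegInvariant] {g : G → E} (hg : g.Odd) : ∫ x, g x ∂μ = 0 := by
  have h := integral_neg_eq_self g μ
  simp only [hg.eq, integral_neg] at h
  have : IsAddTorsionFree E := .of_isTorsionFree ℝ E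
  exact neg_eq_self.mp h

/-- **Moments of the Kesten distribution.** For every `p > 0`,
`E(|V|^p) = (4 Γ(p+1) 8^{p+1} / π^{2p+3}) ∑_{k≥0} (-1)^k/(2k+1)^{2p+3} < ∞`,
and all odd moments of `V` vanish by symmetry. -/
theorem kesten_moments :
    (∀ p : ℝ, 0 < p →
      Integrable (fun x : ℝ => |x| ^ p * kestenDensity x) ∧
      ∫ x : ℝ, |x| ^ p * kestenDensity x =
        (4 * Real.Gamma (p + 1) * (8 : ℝ) ^ (p + 1) / Real.pi ^ (2 * p + 3)) *
          ∑' k : ℕ, (-1 : ℝ) ^ k / (2 * (k : ℝ) + 1) ^ (2 * p + 3)) ∧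
    (∀ m : ℕ, Odd m → ∫ x : ℝ, x ^ m * kestenDensity x = 0) := by
  refine ⟨fun p hp => ?_, fun m hm => ?_⟩
  · obtain ⟨hint, hsum⟩ :=
      integrable_and_hasSum_integral_abs_rpow_mul_kestenDensity (by linarith : -1 < p)
    exact ⟨hint, hsum.tsum_eq.symm.trans tsum_mul_left⟩
  · have hpow : Function.Odd fun x : ℝ => x ^ m := fun x => hm.neg_pow x
    exact (hpow.mul_even kestenDensity_even).integral_eq_zero

end
end

section
/- Maximal resampling gap is o(√n): let τ: ℕ₀ → ℕ₀ be strictly increasing with τ(0) = 0 and τ(k) ≥ k, set T_k = τ(k) - τ(k-1), k(n) = max{k ∈ ℕ : τ(k) ≤ n}, and T̄^n = n - τ(k(n)). If T̄^n = o(√n) as n → ∞, then max_{1 ≤ k ≤ k(n)} T_k = o(√n) as n → ∞. -/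
open Filter Topology Asymptotics

noncomputable section

/-- `epoch τ n = k(n)` is the index of the last resampling time `τ(k) ≤ n`. -/
def epoch (τ : ℕ → ℕ) (n : ℕ) : ℕ :=
  Nat.findGreatest (fun k => τ k ≤ n) n

/-!
The gap `T_{k+1} = τ(k+1) - τ(k)` is one more than the remainder `T̄^m` at the time
`m = τ(k+1) - 1` just before the `(k+1)`-st resampling. Hence the maximal gap up to time `n` is
at most `1 + max_{m ≤ n} T̄^m`, and the running maximum of an `o(√n)` sequence is again `o(√n)`,
because `√n` is monotone and unbounded.
-/

def remainder (τ : ℕ → ℕ) (n : ℕ) : ℕ :=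
  n - τ (epoch τ n)

section Epoch

variable {τ : ℕ → ℕ} {k m n : ℕ}

lemma epoch_eq_of_le_of_lt (hτ : StrictMono τ) (h₁ : τ k ≤ m) (h₂ : m < τ (k + 1)) :
    epoch τ m = k := by
  refine Nat.findGreatest_eq_iff.2 ⟨(hτ.id_le k).trans h₁, fun _ => h₁, fun j hkj _ hj => ?_⟩
  exact absurd (h₂.trans_le ((hτ.monotone hkj).trans hj)) (lt_irrefl m)

lemma apply_le_of_le_epoch (hτ : Monotone τ) (hk : 0 < k) (h : k ≤ epoch τ n) : τ k ≤ n :=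
  (hτ h).trans (Nat.findGreatest_of_ne_zero (P := fun k => τ k ≤ n) rfl (hk.trans_le h).ne')

lemma epoch_apply_succ_sub_one (hτ : StrictMono τ) : epoch τ (τ (k + 1) - 1) = k := by
  have := hτ (lt_add_one k)
  exact epoch_eq_of_le_of_lt hτ (by omega) (by omega)

lemma apply_succ_sub_apply_eq_remainder (hτ : StrictMono τ) :
    τ (k + 1) - τ k = remainder τ (τ (k + 1) - 1) + 1 := by
  have := hτ (lt_add_one k)
  rw [remainder, epoch_apply_succ_sub_one hτ]
  omega

lemma apply_sub_apply_pred_le_partialSups_remainder (hτ : StrictMono τ)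
    (hk : k ∈ Finset.Icc 1 (epoch τ n)) :
    τ k - τ (k - 1) ≤ partialSups (remainder τ) n + 1 := by
  obtain ⟨hk₁, hkn⟩ := Finset.mem_Icc.1 hk
  obtain ⟨j, rfl⟩ := Nat.exists_eq_add_of_le' hk₁
  have hτn := apply_le_of_le_epoch hτ.monotone hk₁ hkn
  rw [Nat.add_sub_cancel, apply_succ_sub_apply_eq_remainder hτ]
  exact Nat.add_le_add_right (le_partialSups_of_le _ (by omega)) 1

end Epoch

lemma Asymptotics.IsLittleO.natCast_partialSups {f : ℕ → ℕ} {g : ℕ → ℝ}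
    (h : (fun n => (f n : ℝ)) =o[atTop] g) (hg : Monotone g) (hg_top : Tendsto g atTop atTop) :
    (fun n => (partialSups f n : ℝ)) =o[atTop] g := by
  refine isLittleO_iff.2 fun ε hε => ?_
  obtain ⟨N, hN⟩ := eventually_atTop.1 ((h.def hε).and (hg_top.eventually_ge_atTop 0))
  filter_upwards [eventually_ge_atTop N,
    (hg_top.const_mul_atTop hε).eventually_ge_atTop (partialSups f N : ℝ)] with n hNn hCn
  obtain ⟨j, hjn, hj⟩ := exists_partialSups_eq f n
  rw [hj, Real.norm_of_nonneg ((hN n hNn).2)]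
  rcases lt_or_ge j N with hjN | hjN
  · exact le_trans (mod_cast le_partialSups_of_le f hjN.le) hCn
  · calc ‖(f j : ℝ)‖ ≤ ε * ‖g j‖ := (hN j hjN).1
      _ = ε * g j := by rw [Real.norm_of_nonneg (hN j hjN).2]
      _ ≤ ε * g n := by gcongr; exact hg hjn

theorem max_gap_little_o_general (τ : ℕ → ℕ) (hmono : StrictMono τ)
    (hrem : (fun n : ℕ => ((n - τ (epoch τ n) : ℕ) : ℝ)) =o[atTop]
      fun n : ℕ => Real.sqrt n) :
    (fun n : ℕ => ((((Finset.Icc 1 (epoch τ n)).sup fun k => τ k - τ (k - 1) : ℕ)) : ℝ))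
      =o[atTop] fun n : ℕ => Real.sqrt n := by
  have hsqrt_mono : Monotone fun n : ℕ => Real.sqrt n :=
    fun _ _ h => Real.sqrt_le_sqrt (Nat.cast_le.2 h)
  have hsqrt_top : Tendsto (fun n : ℕ => Real.sqrt n) atTop atTop :=
    Real.tendsto_sqrt_atTop.comp tendsto_natCast_atTop_atTop
  have hmax (n : ℕ) : ((Finset.Icc 1 (epoch τ n)).sup fun k => τ k - τ (k - 1)) ≤
      partialSups (remainder τ) n + 1 :=
    Finset.sup_le fun _ hk => apply_sub_apply_pred_le_partialSups_remainder hmono hk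
  have hbound : (fun n : ℕ => (partialSups (remainder τ) n : ℝ) + 1) =o[atTop]
      fun n : ℕ => Real.sqrt n :=
    (hrem.natCast_partialSups hsqrt_mono hsqrt_top).add
      ((isLittleO_one_left_iff ℝ).2 (tendsto_norm_atTop_atTop.comp hsqrt_top))
  refine IsBigO.trans_isLittleO (isBigO_of_le _ fun n => ?_) hbound
  rw [Real.norm_natCast, Real.norm_of_nonneg (by positivity)]
  exact_mod_cast hmax n

/-- **The maximal resampling gap is `o(√n)`.** If the remainder after the last
resampling satisfies `T̄ⁿ = n - τ(k(n)) = o(√n)`, then the maximal increment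
`max_{1 ≤ k ≤ k(n)} T_k` of the resampling times prior to time `n` is also
`o(√n)`. -/
theorem max_gap_little_o (τ : ℕ → ℕ) (hmono : StrictMono τ) (hτ0 : τ 0 = 0)
    (hτk : ∀ k, k ≤ τ k)
    (hrem : (fun n : ℕ => ((n - τ (epoch τ n) : ℕ) : ℝ)) =o[atTop]
      fun n : ℕ => Real.sqrt n) :
    (fun n : ℕ => ((((Finset.Icc 1 (epoch τ n)).sup fun k => τ k - τ (k - 1) : ℕ)) : ℝ))
      =o[atTop] fun n : ℕ => Real.sqrt n :=
  max_gap_little_o_general τ hmono hrem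

end
end
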